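/- arXiv:1612.06069 — 2 statements merged into one kernel-verified Lean document; each statement's English description precedes it below -/
import Mathlib

section
/- Morton-hybrid decoding inverts encoding: for i, j < 2^m and β ≤ m, if z = M(i / 2^β, j / 2^β) * 4^β + (i % 2^β) * 2^β + (j % 2^β), then i = (Morton-decode-row of (z / 4^β)) * 2^β + (z / 2^β) % 2^β and j = (Morton-decode-column of (z / 4^β)) * 2^β + z % 2^β. -/
/-- Dilation: insert a zero bit between every two consecutive bits. -/
def dilate (k : ℕ) : ℕ := ∑ t ∈ Finset.range (k + 1), (k.testBit t).toNat * 4 ^ t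

/-- Morton row decoding: un-dilate the odd-position bits. -/
def mortonDecodeRow (z : ℕ) : ℕ :=
  ∑ t ∈ Finset.range (z + 1), (z.testBit (2 * t + 1)).toNat * 2 ^ t

/-- Morton column decoding: un-dilate the even-position bits. -/
def mortonDecodeCol (z : ℕ) : ℕ :=
  ∑ t ∈ Finset.range (z + 1), (z.testBit (2 * t)).toNat * 2 ^ t

/-!
Write `k = 2 ^ β`. Then `z = (M(i / k, j / k) * k + i % k) * k + j % k` is an expansion in base `k`
with last two digits `i % k` and `j % k`, so `z / 4 ^ β = M(i / k, j / k)` and both low parts are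
read off directly. It remains that the decoders invert `M`: from the recursion
`dilate a = a % 2 + 4 * dilate (a / 2)`, bit `2t + 1` of `M(a, b)` is bit `t` of `a` and bit `2t` is
bit `t` of `b`, so each decoding sum reassembles `a` (resp. `b`) from its binary digits.
-/

open Finset

lemma Nat.mul_add_div_of_lt {x k r : ℕ} (hr : r < k) : (x * k + r) / k = x := by
  rw [Nat.add_comm, Nat.add_mul_div_right _ _ (Nat.zero_lt_of_lt hr), Nat.div_eq_of_lt hr,
    Nat.zero_add]

lemma Nat.sum_range_testBit_mul_two_pow (a n : ℕ) :
    ∑ t ∈ range n, (a.testBit t).toNat * 2 ^ t = a % 2 ^ n := by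
  induction n with
  | zero => simp [Nat.mod_one]
  | succ n ih =>
    rw [sum_range_succ, ih, Nat.toNat_testBit, pow_succ, Nat.mod_mul]
    ring

lemma Nat.sum_range_testBit_mul_pow_of_lt (c : ℕ) {a n : ℕ} (h : a < n) :
    ∑ t ∈ range n, (a.testBit t).toNat * c ^ t
      = ∑ t ∈ range (a + 1), (a.testBit t).toNat * c ^ t := by
  refine (sum_subset (range_subset_range.2 h) fun t _ ht => ?_).symm
  have hat : a < 2 ^ t :=
    Nat.lt_two_pow_self.trans_le (Nat.pow_le_pow_right two_pos (by simp at ht; omega))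
  simp [Nat.testBit_eq_false_of_lt hat]

lemma dilate_eq_mod_two_add_four_mul (a : ℕ) : dilate a = a % 2 + 4 * dilate (a / 2) := by
  rcases Nat.eq_zero_or_pos a with rfl | ha
  · simp [dilate]
  have hshift : ∀ t, (a.testBit (t + 1)).toNat * 4 ^ (t + 1)
      = 4 * (((a / 2).testBit t).toNat * 4 ^ t) := fun t => by
    rw [Nat.testBit_succ]; ring
  have hbit0 : (a.testBit 0).toNat = a % 2 := by rw [Nat.toNat_testBit]; simp
  rw [dilate, sum_range_succ', sum_congr rfl fun t _ => hshift t, ← mul_sum,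
    Nat.sum_range_testBit_mul_pow_of_lt 4 (Nat.div_lt_self ha one_lt_two), hbit0, dilate]
  ring

lemma le_dilate (a : ℕ) : a ≤ dilate a := by
  induction a using Nat.strong_induction_on with
  | _ a ih =>
    rcases Nat.eq_zero_or_pos a with rfl | ha
    · exact Nat.zero_le _
    have := ih (a / 2) (Nat.div_lt_self ha one_lt_two)
    rw [dilate_eq_mod_two_add_four_mul]
    omega

def morton (a b : ℕ) : ℕ := 2 * dilate a + dilate b

lemma morton_eq_add_four_mul (a b : ℕ) :
    morton a b = 2 * (a % 2) + b % 2 + 4 * morton (a / 2) (b / 2) := by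
  rw [morton, morton, dilate_eq_mod_two_add_four_mul a, dilate_eq_mod_two_add_four_mul b]
  ring

lemma morton_div_four (a b : ℕ) : morton a b / 4 = morton (a / 2) (b / 2) := by
  rw [morton_eq_add_four_mul a b]
  omega

lemma testBit_morton_two_mul_add_one (t a b : ℕ) :
    (morton a b).testBit (2 * t + 1) = a.testBit t := by
  induction t generalizing a b with
  | zero =>
    have := morton_eq_add_four_mul a b
    have h : morton a b / 2 % 2 = a % 2 := by omega
    simp [Nat.testBit_succ, Nat.testBit_zero, h]
  | succ t ih =>
    rw [show 2 * (t + 1) + 1 = 2 * t + 1 + 1 + 1 by ring, Nat.testBit_succ, Nat.testBit_succ,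
      Nat.div_div_eq_div_mul, morton_div_four, ih, ← Nat.testBit_succ]

lemma testBit_morton_two_mul (t a b : ℕ) : (morton a b).testBit (2 * t) = b.testBit t := by
  induction t generalizing a b with
  | zero =>
    have := morton_eq_add_four_mul a b
    have h : morton a b % 2 = b % 2 := by omega
    simp [Nat.testBit_zero, h]
  | succ t ih =>
    rw [show 2 * (t + 1) = 2 * t + 1 + 1 by ring, Nat.testBit_succ, Nat.testBit_succ,
      Nat.div_div_eq_div_mul, morton_div_four, ih, ← Nat.testBit_succ]

lemma mortonDecodeRow_morton (a b : ℕ) : mortonDecodeRow (morton a b) = a := by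
  have ha : a ≤ morton a b := (le_dilate a).trans (by unfold morton; omega)
  simp only [mortonDecodeRow, testBit_morton_two_mul_add_one,
    Nat.sum_range_testBit_mul_two_pow,
    Nat.mod_eq_of_lt ((Nat.lt_succ_of_le ha).trans Nat.lt_two_pow_self)]

lemma mortonDecodeCol_morton (a b : ℕ) : mortonDecodeCol (morton a b) = b := by
  have hb : b ≤ morton a b := (le_dilate b).trans (by unfold morton; omega)
  simp only [mortonDecodeCol, testBit_morton_two_mul,
    Nat.sum_range_testBit_mul_two_pow,
    Nat.mod_eq_of_lt ((Nat.lt_succ_of_le hb).trans Nat.lt_two_pow_self)]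

theorem morton_hybrid_decode_general (β i j z : ℕ)
    (hz : z = (2 * dilate (i / 2 ^ β) + dilate (j / 2 ^ β)) * 4 ^ β +
        (i % 2 ^ β) * 2 ^ β + j % 2 ^ β) :
    i = mortonDecodeRow (z / 4 ^ β) * 2 ^ β + (z / 2 ^ β) % 2 ^ β ∧
      j = mortonDecodeCol (z / 4 ^ β) * 2 ^ β + z % 2 ^ β := by
  have hi := Nat.mod_lt i (Nat.two_pow_pos β)
  have hj := Nat.mod_lt j (Nat.two_pow_pos β)
  have hfour : 4 ^ β = 2 ^ β * 2 ^ β := by rw [← mul_pow]; rfl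
  replace hz :
      z = (morton (i / 2 ^ β) (j / 2 ^ β) * 2 ^ β + i % 2 ^ β) * 2 ^ β + j % 2 ^ β := by
    rw [hz, morton, hfour]
    ring
  have hdiv : z / 2 ^ β = morton (i / 2 ^ β) (j / 2 ^ β) * 2 ^ β + i % 2 ^ β := by
    rw [hz, Nat.mul_add_div_of_lt hj]
  have hdiv_four : z / 4 ^ β = morton (i / 2 ^ β) (j / 2 ^ β) := by
    rw [hfour, ← Nat.div_div_eq_div_mul, hdiv, Nat.mul_add_div_of_lt hi]
  constructor
  · rw [hdiv_four, hdiv, Nat.mul_add_mod_of_lt hi, mortonDecodeRow_morton, Nat.div_add_mod']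
  · rw [hdiv_four, hz, Nat.mul_add_mod_of_lt hj, mortonDecodeCol_morton, Nat.div_add_mod']

theorem morton_hybrid_decode (m β i j z : ℕ) (hβ : β ≤ m) (hi : i < 2 ^ m) (hj : j < 2 ^ m)
    (hz : z = (2 * dilate (i / 2 ^ β) + dilate (j / 2 ^ β)) * 4 ^ β +
        (i % 2 ^ β) * 2 ^ β + j % 2 ^ β) :
    i = mortonDecodeRow (z / 4 ^ β) * 2 ^ β + (z / 2 ^ β) % 2 ^ β ∧
      j = mortonDecodeCol (z / 4 ^ β) * 2 ^ β + z % 2 ^ β :=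
  morton_hybrid_decode_general β i j z hz
end

section
/- The bit-twiddling un-dilation algorithm is correct: for t < 2^32 with all odd-position bits zero (i.e. t &&& 0xAAAAAAAA = 0), applying successively t ↦ (t ||| (t >>> 1)) &&& 0x33333333, t ↦ (t ||| (t >>> 2)) &&& 0x0F0F0F0F, t ↦ (t ||| (t >>> 4)) &&& 0x00FF00FF, t ↦ (t ||| (t >>> 8)) &&& 0x0000FFFF yields the unique k < 2^16 with dilate(k) = t. -/
def undilate (t : ℕ) : ℕ :=
  let r1 := (t ||| (t >>> 1)) &&& 0x33333333
  let r2 := (r1 ||| (r1 >>> 2)) &&& 0x0F0F0F0F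
  let r3 := (r2 ||| (r2 >>> 4)) &&& 0x00FF00FF
  (r3 ||| (r3 >>> 8)) &&& 0x0000FFFF

lemma dilate_eq_sum_range_of_le {k n : ℕ} (hn : k + 1 ≤ n) :
    dilate k = ∑ t ∈ Finset.range n, (k.testBit t).toNat * 4 ^ t := by
  refine Finset.sum_subset (Finset.range_subset_range.2 hn) fun i _ hi => ?_
  have hki : k < 2 ^ i := by
    have : k < i := by simpa [Nat.lt_succ_iff] using hi
    exact this.trans Nat.lt_two_pow_self
  simp [Nat.testBit_lt_two_pow hki]

lemma dilate_eq_four_mul_add (k : ℕ) : dilate k = 4 * dilate (k / 2) + k % 2 := by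
  rw [dilate_eq_sum_range_of_le (n := k + 2) (by omega),
    dilate_eq_sum_range_of_le (k := k / 2) (n := k + 1) (by omega),
    Finset.sum_range_succ', Finset.mul_sum]
  simp only [Nat.testBit_add_one, Nat.testBit_zero, pow_succ]
  rcases Nat.mod_two_eq_zero_or_one k with h | h <;> simp [h, mul_comm, mul_left_comm]

lemma testBit_dilate (k j : ℕ) :
    (dilate k).testBit j = (decide (j % 2 = 0) && k.testBit (j / 2)) := by
  induction j using Nat.strong_induction_on generalizing k with
  | _ j ih =>
    rw [dilate_eq_four_mul_add, show 4 = 2 ^ 2 from rfl,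
      Nat.testBit_two_pow_mul_add _ (by omega)]
    split_ifs with hj
    · interval_cases j <;> simp [Nat.testBit_zero, Nat.testBit_add_one]
    · rw [ih (j - 2) (by omega), Nat.testBit_div_two]
      grind

lemma dilate_injective : Function.Injective dilate := fun a b h =>
  Nat.eq_of_testBit_eq fun i => by
    simpa [testBit_dilate] using congrArg (Nat.testBit · (2 * i)) h

lemma exists_dilate_eq {n t : ℕ} (ht : t < 4 ^ n) (hodd : ∀ j, t.testBit (2 * j + 1) = false) :
    ∃ k < 2 ^ n, dilate k = t := by
  refine ⟨Nat.ofBits fun i : Fin n => t.testBit (2 * i), ?_, Nat.eq_of_testBit_eq fun j => ?_⟩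
  · exact Nat.lt_pow_two_of_testBit _ fun i hi => by simp [Nat.testBit_ofBits, not_lt.2 hi]
  · rw [testBit_dilate, Nat.testBit_ofBits]
    obtain ⟨i, rfl | rfl⟩ := Nat.even_or_odd' j
    · have hhigh : n ≤ i → t.testBit (2 * i) = false := fun hi =>
        Nat.testBit_lt_two_pow <| ht.trans_le <| by
          rw [show 4 = 2 ^ 2 from rfl, ← pow_mul]
          exact Nat.pow_le_pow_right two_pos (by omega)
      by_cases hi : i < n
      · simp [hi]
      · simp [hi, hhigh (not_lt.1 hi)]
    · simp [hodd]

lemma testBit_two_mul_add_one_of_and_eq_zero {t : ℕ} (ht : t < 2 ^ 32)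
    (hodd : t &&& 0xAAAAAAAA = 0) (j : ℕ) : t.testBit (2 * j + 1) = false := by
  rcases lt_or_ge j 16 with hj | hj
  · have hmask : ∀ j < 16, Nat.testBit 0xAAAAAAAA (2 * j + 1) = true := by decide
    simpa [hmask j hj] using congrArg (Nat.testBit · (2 * j + 1)) hodd
  · exact Nat.testBit_lt_two_pow (ht.trans_le (Nat.pow_le_pow_right two_pos (by omega)))

lemma undilate_lt (t : ℕ) : undilate t < 2 ^ 16 :=
  Nat.and_le_right.trans_lt (by norm_num)

lemma undilate_dilate {k : ℕ} (hk : k < 2 ^ 16) : undilate (dilate k) = k := by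
  refine Nat.eq_of_testBit_eq fun i => ?_
  rcases lt_or_ge i 16 with hi | hi
  · simp only [undilate, Nat.testBit_and, Nat.testBit_or, Nat.testBit_shiftRight, testBit_dilate]
    interval_cases i <;> norm_num [Nat.testBit_eq_decide_div_mod_eq]
  · rw [Nat.testBit_lt_two_pow (hk.trans_le (Nat.pow_le_pow_right two_pos hi)),
      Nat.testBit_lt_two_pow ((undilate_lt _).trans_le (Nat.pow_le_pow_right two_pos hi))]

theorem undilate_algorithm_correct (t : ℕ) (ht : t < 2 ^ 32) (hodd : t &&& 0xAAAAAAAA = 0) :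
    let r1 := (t ||| (t >>> 1)) &&& 0x33333333
    let r2 := (r1 ||| (r1 >>> 2)) &&& 0x0F0F0F0F
    let r3 := (r2 ||| (r2 >>> 4)) &&& 0x00FF00FF
    let r4 := (r3 ||| (r3 >>> 8)) &&& 0x0000FFFF
    r4 < 2 ^ 16 ∧ dilate r4 = t ∧ ∀ k : ℕ, k < 2 ^ 16 → dilate k = t → k = r4 := by
  show undilate t < 2 ^ 16 ∧ dilate (undilate t) = t ∧
    ∀ k : ℕ, k < 2 ^ 16 → dilate k = t → k = undilate t
  obtain ⟨k, hk, rfl⟩ := exists_dilate_eq (n := 16) (by norm_num; omega)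
    (testBit_two_mul_add_one_of_and_eq_zero ht hodd)
  rw [undilate_dilate hk]
  exact ⟨hk, rfl, fun _ _ h => dilate_injective h⟩
end
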